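/- Let 1 ≤ p,q ≤ ∞, ν > 0, Ω ∈ ℝ, α > 0, and let u = u(x) ∈ ḞB^{4−2α−3/p}_{p,q} be divergence-free and F = F(x) ∈ ḞB^{4−4α−3/p}_{p,q} be time-independent. The following are equivalent: (i) u is a stationary mild solution of the fractional Navier–Stokes–Coriolis system, i.e. for every t > 0, û(ξ) = (S^α_Ω(t))^(ξ)û(ξ) − ∫₀^t (S^α_Ω(t−τ))^(ξ)P̂(ξ) iξ·(û ⊛ û)(ξ) dτ + ∫₀^t (S^α_Ω(τ))^(ξ)P̂(ξ)F̂(ξ) dτ for a.e. ξ; (ii) u satisfies û(ξ) = −∫₀^∞ (S^α_Ω(τ))^(ξ)P̂(ξ) iξ·(û ⊛ û)(ξ) dτ + ∫₀^∞ (S^α_Ω(τ))^(ξ)P̂(ξ)F̂(ξ) dτ for a.e. ξ ∈ ℝ³. -/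

import Mathlib

open MeasureTheory ENNReal Filter

noncomputable section

/-- ℝ³ as a Euclidean space. -/
abbrev E3 := EuclideanSpace ℝ (Fin 3)

/-- ℓ^q-norm (q ∈ [1,∞]) of a ℤ-indexed family of extended nonnegative reals. -/
def lqNorm (q : ℝ≥0∞) (a : ℤ → ℝ≥0∞) : ℝ≥0∞ :=
  if q = ∞ then ⨆ j, a j else (∑' j, a j ^ q.toReal) ^ (1 / q.toReal)

/-- Littlewood–Paley piece: φ_j(ξ) = φ(2^{-j} ξ). -/
def lpPiece (φ : E3 → ℝ) (j : ℤ) (ξ : E3) : ℝ := φ (((2:ℝ) ^ (-j)) • ξ)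

/-- The standing hypotheses on the Littlewood–Paley function φ: smooth (hence Schwartz,
being compactly supported), radial, supported in the annulus {3/4 ≤ |ξ| ≤ 8/3}, and
with Σ_{j∈ℤ} φ(2^{-j}ξ) = 1 for ξ ≠ 0. -/
structure IsLPFunction (φ : E3 → ℝ) : Prop where
  smooth : ContDiff ℝ (⊤ : ℕ∞) φ
  radial : ∀ ξ η : E3, ‖ξ‖ = ‖η‖ → φ ξ = φ η
  support : ∀ ξ : E3, φ ξ ≠ 0 → 3/4 ≤ ‖ξ‖ ∧ ‖ξ‖ ≤ 8/3
  partition : ∀ ξ : E3, ξ ≠ 0 → HasSum (fun j : ℤ => lpPiece φ j ξ) 1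

/-- Homogeneous Fourier–Besov norm ‖f‖_{ḞB^s_{p,q}}, computed from g = f̂
(for a possibly vector-valued Fourier transform g). -/
def fbNorm {V : Type*} [NormedAddCommGroup V] [Module ℝ V] (φ : E3 → ℝ) (s : ℝ)
    (p q : ℝ≥0∞) (g : E3 → V) : ℝ≥0∞ :=
  lqNorm q fun j => ENNReal.ofReal ((2:ℝ) ^ ((j : ℝ) * s)) *
    eLpNorm (fun ξ => lpPiece φ j ξ • g ξ) p volume

/-- Time-dependent norm ‖f‖_{𝓛^∞(I; ḞB^s_{p,q})}, I = (0,∞), computed from g(t) = (f(t))^. -/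
def fbNormT {V : Type*} [NormedAddCommGroup V] [Module ℝ V] (φ : E3 → ℝ) (s : ℝ)
    (p q : ℝ≥0∞) (g : ℝ → E3 → V) : ℝ≥0∞ :=
  lqNorm q fun j => ENNReal.ofReal ((2:ℝ) ^ ((j : ℝ) * s)) *
    essSup (fun t => eLpNorm (fun ξ => lpPiece φ j ξ • g t ξ) p volume)
      (volume.restrict (Set.Ioi (0:ℝ)))

/-- The matrix R(ξ). -/
def Rmat (ξ : E3) : Matrix (Fin 3) (Fin 3) ℂ :=
  !![0, ((ξ 2 / ‖ξ‖ : ℝ) : ℂ), ((-(ξ 1) / ‖ξ‖ : ℝ) : ℂ);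
     ((-(ξ 2) / ‖ξ‖ : ℝ) : ℂ), 0, ((ξ 0 / ‖ξ‖ : ℝ) : ℂ);
     ((ξ 1 / ‖ξ‖ : ℝ) : ℂ), ((-(ξ 0) / ‖ξ‖ : ℝ) : ℂ), 0]

/-- Fourier symbol of the fractional Stokes–Coriolis semigroup S^α_Ω(t). -/
def scSymbol (ν Ω α t : ℝ) (ξ : E3) : Matrix (Fin 3) (Fin 3) ℂ :=
  ((Real.exp (-(ν * t * ‖ξ‖ ^ (2*α))) : ℝ) : ℂ) •
    (((Real.cos (Ω * (ξ 2 / ‖ξ‖) * t) : ℝ) : ℂ) • (1 : Matrix (Fin 3) (Fin 3) ℂ) +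
     ((Real.sin (Ω * (ξ 2 / ‖ξ‖) * t) : ℝ) : ℂ) • Rmat ξ)

/-- Fourier symbol of the Leray projector, P̂(ξ) = I − ξξᵀ/|ξ|². -/
def leraySymbol (ξ : E3) : Matrix (Fin 3) (Fin 3) ℂ :=
  1 - Matrix.of fun m k => ((ξ m * ξ k / ‖ξ‖ ^ 2 : ℝ) : ℂ)

/-- Componentwise convolution (û ⊛ v̂)_{mk} = û_m ∗ v̂_k. -/
def tensConv (u v : E3 → Fin 3 → ℂ) (ξ : E3) : Fin 3 → Fin 3 → ℂ :=
  fun m k => ∫ η, u (ξ - η) m * v η k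

/-- Fourier symbol of the nonlinearity: iξ·(û ⊛ v̂), i.e. k ↦ i Σ_m ξ_m (û_m ∗ v̂_k)(ξ). -/
def nlSymbol (u v : E3 → Fin 3 → ℂ) (ξ : E3) : Fin 3 → ℂ :=
  fun k => Complex.I * ∑ m, (ξ m : ℂ) * tensConv u v ξ m k

/-- Fourier description of the bilinear Duhamel term B(u,v)(t). -/
def duhamelB (ν Ω α : ℝ) (u v : ℝ → E3 → Fin 3 → ℂ) (t : ℝ) (ξ : E3) : Fin 3 → ℂ :=
  -∫ τ in Set.Ioc 0 t,
      (scSymbol ν Ω α (t - τ) ξ).mulVec ((leraySymbol ξ).mulVec (nlSymbol (u τ) (v τ) ξ))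

/-- Fourier description of the Duhamel force term ∫₀^t S^α_Ω(t−τ) ℙ F(τ) dτ. -/
def duhamelF (ν Ω α : ℝ) (F : ℝ → E3 → Fin 3 → ℂ) (t : ℝ) (ξ : E3) : Fin 3 → ℂ :=
  ∫ τ in Set.Ioc 0 t,
      (scSymbol ν Ω α (t - τ) ξ).mulVec ((leraySymbol ξ).mulVec (F τ ξ))

/-- u (described by its Fourier transform in space) is a mild solution of the fractional
Navier–Stokes–Coriolis system with initial data u₀ and external force F. -/
def IsMildSolution (ν Ω α : ℝ) (u0 : E3 → Fin 3 → ℂ) (F : ℝ → E3 → Fin 3 → ℂ)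
    (u : ℝ → E3 → Fin 3 → ℂ) : Prop :=
  (∀ t > (0:ℝ), ∀ᵐ ξ : E3, (∑ m, (ξ m : ℂ) * u t ξ m) = 0) ∧
  ∀ t > (0:ℝ), ∀ᵐ ξ : E3,
    u t ξ = (scSymbol ν Ω α t ξ).mulVec (u0 ξ) + duhamelB ν Ω α u u t ξ + duhamelF ν Ω α F t ξ

/-- u (described by its Fourier transform) is a stationary solution of the stationary
fractional Navier–Stokes–Coriolis system with (time-independent) external force F. -/
def IsStationarySolution (ν Ω α : ℝ) (F u : E3 → Fin 3 → ℂ) : Prop :=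
  ∀ᵐ ξ : E3,
    u ξ = -(∫ τ in Set.Ioi (0:ℝ),
              (scSymbol ν Ω α τ ξ).mulVec ((leraySymbol ξ).mulVec (nlSymbol u u ξ)))
          + ∫ τ in Set.Ioi (0:ℝ),
              (scSymbol ν Ω α τ ξ).mulVec ((leraySymbol ξ).mulVec (F ξ))


open MeasureTheory ENNReal Filter Set Matrix

lemma norm_sq_eq3 (ξ : E3) : ‖ξ‖^2 = ξ 0 ^ 2 + ξ 1 ^ 2 + ξ 2 ^ 2 := by
  rw [EuclideanSpace.norm_eq, Real.sq_sqrt (by positivity)]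
  simp [Fin.sum_univ_three, Real.norm_eq_abs, sq_abs]

lemma MM_eq (ξ : E3) (hξ : ξ ≠ 0) :
    (Matrix.of fun m k => ((ξ m * ξ k / ‖ξ‖ ^ 2 : ℝ) : ℂ)) *
      (Matrix.of fun m k => ((ξ m * ξ k / ‖ξ‖ ^ 2 : ℝ) : ℂ))
      = Matrix.of fun m k => ((ξ m * ξ k / ‖ξ‖ ^ 2 : ℝ) : ℂ) := by
  have hn : ‖ξ‖ ≠ 0 := norm_ne_zero_iff.2 hξ
  have hnc : ((‖ξ‖:ℝ):ℂ) ≠ 0 := by exact_mod_cast hn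
  have hc : ((ξ 0:ℝ):ℂ)^2 + ((ξ 1:ℝ):ℂ)^2 + ((ξ 2:ℝ):ℂ)^2 = ((‖ξ‖:ℝ):ℂ)^2 := by
    exact_mod_cast congrArg (fun x : ℝ => (x:ℂ)) (norm_sq_eq3 ξ).symm
  ext i j
  simp only [Matrix.mul_apply, Matrix.of_apply, Fin.sum_univ_three]
  push_cast
  field_simp
  linear_combination ((ξ i : ℂ) * (ξ j : ℂ)) * hc

lemma leray_idem (ξ : E3) (hξ : ξ ≠ 0) : leraySymbol ξ * leraySymbol ξ = leraySymbol ξ := by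
  unfold leraySymbol
  simp only [sub_mul, mul_sub, one_mul, mul_one, MM_eq ξ hξ]
  abel

lemma RR_eq (ξ : E3) (hξ : ξ ≠ 0) : Rmat ξ * Rmat ξ = -(leraySymbol ξ) := by
  have hn : ‖ξ‖ ≠ 0 := norm_ne_zero_iff.2 hξ
  have hnc : ((‖ξ‖:ℝ):ℂ) ≠ 0 := by exact_mod_cast hn
  have hc : ((ξ 0:ℝ):ℂ)^2 + ((ξ 1:ℝ):ℂ)^2 + ((ξ 2:ℝ):ℂ)^2 = ((‖ξ‖:ℝ):ℂ)^2 := by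
    exact_mod_cast congrArg (fun x : ℝ => (x:ℂ)) (norm_sq_eq3 ξ).symm
  ext i j
  fin_cases i <;> fin_cases j <;>
    simp [Rmat, leraySymbol, Matrix.mul_apply, Matrix.of_apply, Fin.sum_univ_three,
      Matrix.one_apply] <;>
    (try push_cast) <;>
    (try field_simp) <;>
    first
      | ring1
      | linear_combination (-((‖ξ‖:ℝ):ℂ)^4) * hc
      | linear_combination (((‖ξ‖:ℝ):ℂ)^4) * hc
      | linear_combination (-((‖ξ‖:ℝ):ℂ)^2) * hc
      | linear_combination (((‖ξ‖:ℝ):ℂ)^2) * hc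
      | linear_combination hc
      | linear_combination -hc
lemma sc_mulVec (ν Ω α t : ℝ) (ξ : E3) (v : Fin 3 → ℂ) :
    (scSymbol ν Ω α t ξ).mulVec v
      = ((Real.exp (-(ν * t * ‖ξ‖ ^ (2*α))) : ℝ) : ℂ) •
          (((Real.cos (Ω * (ξ 2 / ‖ξ‖) * t) : ℝ) : ℂ) • v
            + ((Real.sin (Ω * (ξ 2 / ‖ξ‖) * t) : ℝ) : ℂ) • (Rmat ξ).mulVec v) := by
  simp [scSymbol, Matrix.add_mulVec, Matrix.smul_mulVec, Matrix.one_mulVec, smul_add]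

lemma sc_semigroup (ν Ω α : ℝ) (s t : ℝ) (ξ : E3) (hξ : ξ ≠ 0) (w : Fin 3 → ℂ) :
    (scSymbol ν Ω α s ξ).mulVec ((scSymbol ν Ω α t ξ).mulVec ((leraySymbol ξ).mulVec w))
      = (scSymbol ν Ω α (s+t) ξ).mulVec ((leraySymbol ξ).mulVec w) := by
  set p := (leraySymbol ξ).mulVec w with hp
  have hRRp : (Rmat ξ).mulVec ((Rmat ξ).mulVec p) = -p := by
    rw [hp, Matrix.mulVec_mulVec, Matrix.mulVec_mulVec, RR_eq ξ hξ,
      Matrix.neg_mul, Matrix.neg_mulVec, leray_idem ξ hξ]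
  have hexp : Real.exp (-(ν * (s+t) * ‖ξ‖ ^ (2*α)))
      = Real.exp (-(ν * s * ‖ξ‖ ^ (2*α))) * Real.exp (-(ν * t * ‖ξ‖ ^ (2*α))) := by
    rw [← Real.exp_add]; ring_nf
  have harg : Ω * (ξ 2 / ‖ξ‖) * (s + t) = Ω * (ξ 2 / ‖ξ‖) * s + Ω * (ξ 2 / ‖ξ‖) * t := by ring
  rw [sc_mulVec ν Ω α t, Matrix.mulVec_smul, Matrix.mulVec_add, Matrix.mulVec_smul,
    Matrix.mulVec_smul, sc_mulVec ν Ω α s, sc_mulVec ν Ω α s, sc_mulVec ν Ω α (s+t),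
    hRRp, hexp, harg, Real.cos_add, Real.sin_add]
  push_cast
  match_scalars <;> ring
lemma sc_norm_le (ν Ω α t : ℝ) (ξ : E3) (v : Fin 3 → ℂ) :
    ‖(scSymbol ν Ω α t ξ).mulVec v‖
      ≤ Real.exp (-(ν * ‖ξ‖ ^ (2*α)) * t) * (‖v‖ + ‖(Rmat ξ).mulVec v‖) := by
  rw [sc_mulVec, norm_smul]
  have e1 : ‖((Real.exp (-(ν * t * ‖ξ‖ ^ (2*α))) : ℝ) : ℂ)‖
      = Real.exp (-(ν * ‖ξ‖ ^ (2*α)) * t) := by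
    rw [Complex.norm_real, Real.norm_eq_abs, Real.abs_exp]
    ring_nf
  rw [e1]
  have h2 : ‖((Real.cos (Ω * (ξ 2 / ‖ξ‖) * t) : ℝ) : ℂ) • v
        + ((Real.sin (Ω * (ξ 2 / ‖ξ‖) * t) : ℝ) : ℂ) • (Rmat ξ).mulVec v‖
      ≤ ‖v‖ + ‖(Rmat ξ).mulVec v‖ := by
    refine (norm_add_le _ _).trans (add_le_add ?_ ?_) <;>
      rw [norm_smul, Complex.norm_real, Real.norm_eq_abs] <;>
      refine mul_le_of_le_one_left (norm_nonneg _) ?_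
    · exact Real.abs_cos_le_one _
    · exact Real.abs_sin_le_one _
  exact mul_le_mul_of_nonneg_left h2 (Real.exp_nonneg _)

lemma sc_integrableOn {ν α : ℝ} (Ω : ℝ) (hν : 0 < ν) (hα : 0 < α) (ξ : E3) (hξ : ξ ≠ 0)
    (v : Fin 3 → ℂ) :
    MeasureTheory.IntegrableOn (fun τ => (scSymbol ν Ω α τ ξ).mulVec v) (Set.Ioi 0) := by
  have hr : 0 < ‖ξ‖ ^ (2*α) := Real.rpow_pos_of_pos (norm_pos_iff.2 hξ) _
  have hb : 0 < ν * ‖ξ‖ ^ (2*α) := mul_pos hν hr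
  have hint : MeasureTheory.IntegrableOn
      (fun τ => Real.exp (-(ν * ‖ξ‖ ^ (2*α)) * τ) * (‖v‖ + ‖(Rmat ξ).mulVec v‖))
      (Set.Ioi 0) := (exp_neg_integrableOn_Ioi 0 hb).mul_const _
  refine hint.mono' ?_ (Filter.Eventually.of_forall fun τ => sc_norm_le ν Ω α τ ξ v)
  · have heq : (fun τ => (scSymbol ν Ω α τ ξ).mulVec v)
        = fun τ => ((Real.exp (-(ν * τ * ‖ξ‖ ^ (2*α))) : ℝ) : ℂ) •
            (((Real.cos (Ω * (ξ 2 / ‖ξ‖) * τ) : ℝ) : ℂ) • v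
              + ((Real.sin (Ω * (ξ 2 / ‖ξ‖) * τ) : ℝ) : ℂ) • (Rmat ξ).mulVec v) :=
      funext fun τ => sc_mulVec ν Ω α τ ξ v
    rw [heq]
    apply Continuous.aestronglyMeasurable
    fun_prop

lemma integral_Ioc_reflect {V : Type*} [NormedAddCommGroup V] [NormedSpace ℝ V]
    (f : ℝ → V) (t : ℝ) (ht : 0 ≤ t) :
    ∫ τ in Set.Ioc 0 t, f (t - τ) = ∫ τ in Set.Ioc 0 t, f τ := by
  rw [← intervalIntegral.integral_of_le ht, ← intervalIntegral.integral_of_le ht,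
    intervalIntegral.integral_comp_sub_left f t]
  simp

lemma integral_Ioi_shift {V : Type*} [NormedAddCommGroup V] [NormedSpace ℝ V]
    (f : ℝ → V) (t : ℝ) :
    ∫ τ in Set.Ioi 0, f (t + τ) = ∫ τ in Set.Ioi t, f τ := by
  rw [← MeasureTheory.integral_indicator measurableSet_Ioi,
    ← MeasureTheory.integral_indicator measurableSet_Ioi,
    ← MeasureTheory.integral_add_right_eq_self (fun τ => Set.indicator (Set.Ioi t) f τ) t]
  congr 1
  funext τ
  by_cases h : 0 < τ
  · have h1 : τ ∈ Set.Ioi (0:ℝ) := h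
    have h2 : τ + t ∈ Set.Ioi t := by simpa using h
    rw [Set.indicator_of_mem h1, Set.indicator_of_mem h2, add_comm]
  · have h1 : τ ∉ Set.Ioi (0:ℝ) := h
    have h2 : τ + t ∉ Set.Ioi t := by simpa using h
    simp only [Set.indicator_of_notMem h1, Set.indicator_of_notMem h2]

lemma integral_Ioi_split {V : Type*} [NormedAddCommGroup V] [NormedSpace ℝ V]
    (f : ℝ → V) (t : ℝ) (ht : 0 ≤ t)
    (hf : MeasureTheory.IntegrableOn f (Set.Ioi 0)) :
    ∫ τ in Set.Ioi 0, f τ = (∫ τ in Set.Ioc 0 t, f τ) + ∫ τ in Set.Ioi t, f τ := by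
  rw [← Set.Ioc_union_Ioi_eq_Ioi ht,
    MeasureTheory.setIntegral_union (Set.Ioc_disjoint_Ioi le_rfl) measurableSet_Ioi
      (hf.mono_set (by rw [← Set.Ioc_union_Ioi_eq_Ioi ht]; exact Set.subset_union_left))
      (hf.mono_set (by rw [← Set.Ioc_union_Ioi_eq_Ioi ht]; exact Set.subset_union_right))]
lemma ae_ne_zero : ∀ᵐ ξ : E3, ξ ≠ 0 := by
  refine (MeasureTheory.ae_iff).2 ?_
  have : {ξ : E3 | ¬ ξ ≠ 0} = {0} := by ext ξ; simp
  rw [this]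
  exact MeasureTheory.measure_singleton 0

lemma sc_tendsto_zero {ν α : ℝ} (Ω : ℝ) (hν : 0 < ν) (hα : 0 < α) (ξ : E3) (hξ : ξ ≠ 0)
    (v : Fin 3 → ℂ) :
    Filter.Tendsto (fun n : ℕ => (scSymbol ν Ω α ((n:ℝ)+1) ξ).mulVec v)
      Filter.atTop (nhds 0) := by
  have hr : 0 < ‖ξ‖ ^ (2*α) := Real.rpow_pos_of_pos (norm_pos_iff.2 hξ) _
  have hb : 0 < ν * ‖ξ‖ ^ (2*α) := mul_pos hν hr
  rw [tendsto_zero_iff_norm_tendsto_zero]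
  refine squeeze_zero (fun n => norm_nonneg _) (fun n => sc_norm_le ν Ω α _ ξ v) ?_
  have h1 : Filter.Tendsto (fun n : ℕ => (ν * ‖ξ‖ ^ (2*α)) * ((n:ℝ)+1))
      Filter.atTop Filter.atTop :=
    Filter.Tendsto.const_mul_atTop hb
      (Filter.tendsto_atTop_add_const_right _ 1 tendsto_natCast_atTop_atTop)
  have h2 : Filter.Tendsto (fun n : ℕ => Real.exp (-(ν * ‖ξ‖ ^ (2*α)) * ((n:ℝ)+1)))
      Filter.atTop (nhds 0) := by
    have := Real.tendsto_exp_neg_atTop_nhds_zero.comp h1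
    refine this.congr fun n => ?_
    simp only [Function.comp]
    ring_nf
  have := h2.mul_const (‖v‖ + ‖(Rmat ξ).mulVec v‖)
  simpa using this
/-- **Equivalent formulations of stationary mild solutions** (Lemma `equivStationary`).
Let 1 ≤ p,q ≤ ∞, ν > 0, Ω ∈ ℝ, α > 0; let u ∈ ḞB^{4−2α−3/p}_{p,q} be divergence-free and
F ∈ ḞB^{4−4α−3/p}_{p,q} time-independent (both represented by their Fourier transforms).
Then u is a stationary mild solution of (FNSC), i.e. for every t > 0 and a.e. ξ,
û = (S^α_Ω(t))^û − ∫₀^t (S^α_Ω(t−τ))^ P̂ iξ·(û ⊛ û) dτ + ∫₀^t (S^α_Ω(τ))^ P̂ F̂ dτ,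
if and only if for a.e. ξ,
û = −∫₀^∞ (S^α_Ω(τ))^ P̂ iξ·(û ⊛ û) dτ + ∫₀^∞ (S^α_Ω(τ))^ P̂ F̂ dτ. -/
theorem stationary_mild_equivalence
    (φ : E3 → ℝ) (hφ : IsLPFunction φ)
    (p q : ℝ≥0∞) (hp : 1 ≤ p) (hq : 1 ≤ q)
    (ν Ω α : ℝ) (hν : 0 < ν) (hα : 0 < α)
    (u F : E3 → Fin 3 → ℂ)
    (hu : fbNorm φ (4 - 2*α - 3/p.toReal) p q u < ⊤)
    (hdiv : ∀ᵐ ξ : E3, (∑ m, (ξ m : ℂ) * u ξ m) = 0)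
    (hF : fbNorm φ (4 - 4*α - 3/p.toReal) p q F < ⊤) :
    (∀ t > (0:ℝ), ∀ᵐ ξ : E3,
        u ξ = (scSymbol ν Ω α t ξ).mulVec (u ξ)
            - (∫ τ in Set.Ioc 0 t,
                (scSymbol ν Ω α (t - τ) ξ).mulVec ((leraySymbol ξ).mulVec (nlSymbol u u ξ)))
            + ∫ τ in Set.Ioc 0 t,
                (scSymbol ν Ω α τ ξ).mulVec ((leraySymbol ξ).mulVec (F ξ)))
      ↔ IsStationarySolution ν Ω α F u := by
  have hne := ae_ne_zero
  constructor
  · -- mild for all t > 0  ⟹  stationary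
    intro H
    have H' : ∀ᵐ ξ : E3, ∀ n : ℕ,
        u ξ = (scSymbol ν Ω α ((n:ℝ)+1) ξ).mulVec (u ξ)
            - (∫ τ in Set.Ioc 0 ((n:ℝ)+1),
                (scSymbol ν Ω α (((n:ℝ)+1) - τ) ξ).mulVec
                  ((leraySymbol ξ).mulVec (nlSymbol u u ξ)))
            + ∫ τ in Set.Ioc 0 ((n:ℝ)+1),
                (scSymbol ν Ω α τ ξ).mulVec ((leraySymbol ξ).mulVec (F ξ)) :=
      (MeasureTheory.ae_all_iff).2 fun n => H ((n:ℝ)+1) (by positivity)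
    unfold IsStationarySolution
    filter_upwards [H', hne] with ξ hξn hξ0
    have hiN := sc_integrableOn Ω hν hα ξ hξ0 ((leraySymbol ξ).mulVec (nlSymbol u u ξ))
    have hiF := sc_integrableOn Ω hν hα ξ hξ0 ((leraySymbol ξ).mulVec (F ξ))
    have key : ∀ n : ℕ,
        u ξ = (scSymbol ν Ω α ((n:ℝ)+1) ξ).mulVec (u ξ)
            - (∫ τ in Set.Ioc 0 ((n:ℝ)+1),
                (scSymbol ν Ω α τ ξ).mulVec ((leraySymbol ξ).mulVec (nlSymbol u u ξ)))
            + ∫ τ in Set.Ioc 0 ((n:ℝ)+1),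
                (scSymbol ν Ω α τ ξ).mulVec ((leraySymbol ξ).mulVec (F ξ)) := by
      intro n
      have hrefl : (∫ τ in Set.Ioc 0 ((n:ℝ)+1),
            (scSymbol ν Ω α (((n:ℝ)+1) - τ) ξ).mulVec
              ((leraySymbol ξ).mulVec (nlSymbol u u ξ)))
          = ∫ τ in Set.Ioc 0 ((n:ℝ)+1),
              (scSymbol ν Ω α τ ξ).mulVec ((leraySymbol ξ).mulVec (nlSymbol u u ξ)) :=
        integral_Ioc_reflect
          (fun τ => (scSymbol ν Ω α τ ξ).mulVec ((leraySymbol ξ).mulVec (nlSymbol u u ξ)))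
          ((n:ℝ)+1) (by positivity)
      rw [← hrefl]
      exact hξn n
    have hmono : Monotone (fun n : ℕ => Set.Ioc (0:ℝ) ((n:ℝ)+1)) := by
      intro a b hab
      exact Set.Ioc_subset_Ioc le_rfl
        (by have := (Nat.cast_le (α := ℝ)).2 hab; linarith)
    have hU : ⋃ n : ℕ, Set.Ioc (0:ℝ) ((n:ℝ)+1) = Set.Ioi 0 := by
      ext x
      simp only [Set.mem_iUnion, Set.mem_Ioc, Set.mem_Ioi]
      constructor
      · rintro ⟨n, h1, _⟩; exact h1
      · intro hx
        obtain ⟨n, hn⟩ := exists_nat_ge x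
        exact ⟨n, hx, hn.trans (by linarith)⟩
    have h2 : Filter.Tendsto (fun n : ℕ => ∫ τ in Set.Ioc 0 ((n:ℝ)+1),
          (scSymbol ν Ω α τ ξ).mulVec ((leraySymbol ξ).mulVec (nlSymbol u u ξ)))
        Filter.atTop (nhds (∫ τ in Set.Ioi 0,
          (scSymbol ν Ω α τ ξ).mulVec ((leraySymbol ξ).mulVec (nlSymbol u u ξ)))) := by
      have := MeasureTheory.tendsto_setIntegral_of_monotone
        (fun n => measurableSet_Ioc) hmono (hU ▸ hiN)
      rwa [hU] at this
    have h3 : Filter.Tendsto (fun n : ℕ => ∫ τ in Set.Ioc 0 ((n:ℝ)+1),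
          (scSymbol ν Ω α τ ξ).mulVec ((leraySymbol ξ).mulVec (F ξ)))
        Filter.atTop (nhds (∫ τ in Set.Ioi 0,
          (scSymbol ν Ω α τ ξ).mulVec ((leraySymbol ξ).mulVec (F ξ)))) := by
      have := MeasureTheory.tendsto_setIntegral_of_monotone
        (fun n => measurableSet_Ioc) hmono (hU ▸ hiF)
      rwa [hU] at this
    have h1 := sc_tendsto_zero Ω hν hα ξ hξ0 (u ξ)
    have hlim := (h1.sub h2).add h3
    have hconst : Filter.Tendsto (fun _ : ℕ => u ξ) Filter.atTop (nhds (u ξ)) :=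
      tendsto_const_nhds
    have := tendsto_nhds_unique (hlim.congr fun n => (key n).symm) hconst
    rw [← this, zero_sub]
  · -- stationary  ⟹  mild for all t > 0
    intro H t ht
    filter_upwards [H, hne] with ξ hstat hξ0
    have hiN := sc_integrableOn Ω hν hα ξ hξ0 ((leraySymbol ξ).mulVec (nlSymbol u u ξ))
    have hiF := sc_integrableOn Ω hν hα ξ hξ0 ((leraySymbol ξ).mulVec (F ξ))
    have hSt : ∀ (w : Fin 3 → ℂ),
        MeasureTheory.IntegrableOn
          (fun τ => (scSymbol ν Ω α τ ξ).mulVec ((leraySymbol ξ).mulVec w)) (Set.Ioi 0) →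
        (scSymbol ν Ω α t ξ).mulVec (∫ τ in Set.Ioi 0,
            (scSymbol ν Ω α τ ξ).mulVec ((leraySymbol ξ).mulVec w))
          = ∫ τ in Set.Ioi t,
              (scSymbol ν Ω α τ ξ).mulVec ((leraySymbol ξ).mulVec w) := by
      intro w hw
      set L : (Fin 3 → ℂ) →L[ℂ] (Fin 3 → ℂ) :=
        LinearMap.toContinuousLinearMap (Matrix.mulVecLin (scSymbol ν Ω α t ξ)) with hLdef
      have hL := ContinuousLinearMap.integral_comp_comm L hw
      have hLapp : ∀ v : Fin 3 → ℂ, L v = (scSymbol ν Ω α t ξ).mulVec v := fun v => rfl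
      calc (scSymbol ν Ω α t ξ).mulVec (∫ τ in Set.Ioi 0,
              (scSymbol ν Ω α τ ξ).mulVec ((leraySymbol ξ).mulVec w))
          = ∫ τ in Set.Ioi 0, (scSymbol ν Ω α t ξ).mulVec
              ((scSymbol ν Ω α τ ξ).mulVec ((leraySymbol ξ).mulVec w)) := by
            rw [← hLapp]
            rw [← hL]
            exact MeasureTheory.integral_congr_ae
              (Filter.Eventually.of_forall fun τ => (hLapp _).symm)
        _ = ∫ τ in Set.Ioi 0,
              (scSymbol ν Ω α (t+τ) ξ).mulVec ((leraySymbol ξ).mulVec w) :=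
            MeasureTheory.integral_congr_ae
              (Filter.Eventually.of_forall fun τ => sc_semigroup ν Ω α t τ ξ hξ0 w)
        _ = ∫ τ in Set.Ioi t,
              (scSymbol ν Ω α τ ξ).mulVec ((leraySymbol ξ).mulVec w) :=
            integral_Ioi_shift
              (fun τ => (scSymbol ν Ω α τ ξ).mulVec ((leraySymbol ξ).mulVec w)) t
    have e1 := hSt (nlSymbol u u ξ) hiN
    have e2 := hSt (F ξ) hiF
    have hsplitN := integral_Ioi_split
      (fun τ => (scSymbol ν Ω α τ ξ).mulVec ((leraySymbol ξ).mulVec (nlSymbol u u ξ)))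
      t ht.le hiN
    have hsplitF := integral_Ioi_split
      (fun τ => (scSymbol ν Ω α τ ξ).mulVec ((leraySymbol ξ).mulVec (F ξ)))
      t ht.le hiF
    have hrefl : (∫ τ in Set.Ioc 0 t,
          (scSymbol ν Ω α (t - τ) ξ).mulVec ((leraySymbol ξ).mulVec (nlSymbol u u ξ)))
        = ∫ τ in Set.Ioc 0 t,
            (scSymbol ν Ω α τ ξ).mulVec ((leraySymbol ξ).mulVec (nlSymbol u u ξ)) :=
      integral_Ioc_reflect
        (fun τ => (scSymbol ν Ω α τ ξ).mulVec ((leraySymbol ξ).mulVec (nlSymbol u u ξ)))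
        t ht.le
    rw [hrefl]
    have : (scSymbol ν Ω α t ξ).mulVec (u ξ)
          - (∫ τ in Set.Ioc 0 t,
              (scSymbol ν Ω α τ ξ).mulVec ((leraySymbol ξ).mulVec (nlSymbol u u ξ)))
          + (∫ τ in Set.Ioc 0 t,
              (scSymbol ν Ω α τ ξ).mulVec ((leraySymbol ξ).mulVec (F ξ)))
        = u ξ := by
      rw [hstat, Matrix.mulVec_add, Matrix.mulVec_neg, e1, e2, hsplitN, hsplitF]
      abel
    exact this.symm

end
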